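/- If S is an additive numerical semigroup whose two smallest minimal generators differ by 1 (equivalently, the blowup B equals ℕ), then d_max(S) equals the denumerant of e − 1 in ℕ with respect to the generating set D = {e, a₁−e, …, a_t−e}, where e is the multiplicity of S. -/

import Mathlib

open Finset

/-- The set of factorizations of `n` over the generating tuple `g`. -/
def Fac {t : ℕ} (g : Fin (t + 1) → ℕ) (n : ℕ) : Set (Fin (t + 1) → ℕ) :=
  {c | ∑ i, c i * g i = n}

/-- The numerical semigroup generated by the tuple `g`. -/
def Sg {t : ℕ} (g : Fin (t + 1) → ℕ) : Set ℕ :=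
  {n | ∃ c : Fin (t + 1) → ℕ, ∑ i, c i * g i = n}

/-- The order of `n`: the maximal length of a factorization of `n` over `g`. -/
noncomputable def ordOf {t : ℕ} (g : Fin (t + 1) → ℕ) (n : ℕ) : ℕ :=
  sSup {r | ∃ c ∈ Fac g n, ∑ i, c i = r}

/-- The minimal length of a factorization of `n` over `g`. -/
noncomputable def minordOf {t : ℕ} (g : Fin (t + 1) → ℕ) (n : ℕ) : ℕ :=
  sInf {r | ∃ c ∈ Fac g n, ∑ i, c i = r}

/-- The denumerant of `n` with respect to `g`. -/
noncomputable def denum {t : ℕ} (g : Fin (t + 1) → ℕ) (n : ℕ) : ℕ :=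
  (Fac g n).ncard

/-- The maximal denumerant of an element: the number of maximal-length factorizations. -/
noncomputable def dmaxEl {t : ℕ} (g : Fin (t + 1) → ℕ) (n : ℕ) : ℕ :=
  {c ∈ Fac g n | ∑ i, c i = ordOf g n}.ncard

/-- The maximal denumerant of the semigroup generated by `g`. -/
noncomputable def dmax {t : ℕ} (g : Fin (t + 1) → ℕ) : ℕ :=
  sSup {m | ∃ n ∈ Sg g, dmaxEl g n = m}

/-- The generating tuple `D` of the blowup: `{e, a₁ - e, …, a_t - e}`. -/
def blowD {t : ℕ} (g : Fin (t + 1) → ℕ) : Fin (t + 1) → ℕ :=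
  fun i => if i = 0 then g 0 else g i - g 0

/-- The adjustment of `n`:  `n - ord(n) * e`. -/
noncomputable def adj {t : ℕ} (g : Fin (t + 1) → ℕ) (n : ℕ) : ℕ :=
  n - ordOf g n * g 0

/-- The Apery set with respect to `u` of the semigroup generated by `g`. -/
def Ap {t : ℕ} (g : Fin (t + 1) → ℕ) (u : ℕ) : Set ℕ :=
  {w ∈ Sg g | ¬ ∃ b ∈ Sg g, w = b + u}

/-- `g` is the (strictly increasing) minimal generating tuple of a numerical semigroup
with multiplicity `g 0`. -/
structure IsNumSgp {t : ℕ} (g : Fin (t + 1) → ℕ) : Prop where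
  mono : StrictMono g
  pos : 0 < g 0
  gcd_eq_one : Finset.gcd Finset.univ g = 1
  minimal : ∀ i, ∀ c : Fin (t + 1) → ℕ, ∑ j, c j * g j = g i → c = Pi.single i 1

/-- `S` is additive: `ord(u + e) = ord(u) + 1` for all `u ∈ S`. -/
def IsAdditive {t : ℕ} (g : Fin (t + 1) → ℕ) : Prop :=
  ∀ u ∈ Sg g, ordOf g (u + g 0) = ordOf g u + 1

/-- Membership of an integer in a set of naturals. -/
def ZMem (T : Set ℕ) (z : ℤ) : Prop := 0 ≤ z ∧ z.toNat ∈ T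

/-- The Frobenius number: the largest integer not in `T`. -/
noncomputable def Frob (T : Set ℕ) : ℤ := sSup {z : ℤ | ¬ ZMem T z}

/-- `T` is symmetric: whenever `x + y = F(T)`, exactly one of `x`, `y` lies in `T`. -/
def Symm (T : Set ℕ) : Prop := ∀ x y : ℤ, x + y = Frob T → (ZMem T x ↔ ¬ ZMem T y)

/-- An abstract numerical semigroup. -/
structure IsNumSemigroup (T : Set ℕ) : Prop where
  zero_mem : 0 ∈ T
  add_mem : ∀ a ∈ T, ∀ b ∈ T, a + b ∈ T
  cofinite : Tᶜ.Finite

/-- The Apery set of an abstract numerical semigroup. -/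
def ApS (T : Set ℕ) (u : ℕ) : Set ℕ := {w ∈ T | ¬ ∃ b ∈ T, w = b + u}

/-! Write `e = g 0`. A factorization `c` of `n` of length `r` satisfies `n = r e + excess g c`
with `excess g c = ∑_{i ≥ 1} cᵢ (aᵢ - e)`, and dropping `c₀` turns it into a factorization of
`excess g c` over `D`. Let `c` have maximal length, put `m = excess g c` and let `s ≤ m` be the
number of parts of `c` other than `e`. By additivity `n + (m - s) e` has order `c₀ + m`; if
`m ≥ e` it also equals `(c₀ + e + 1) e + (m - e) a₁` because `a₁ = e + 1`, a factorization of
length `c₀ + m + 1`. Hence `n - ord(n) e < e`, and as `1 ∈ D` makes `d(·; D)` monotone,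
`dmaxEl g n ≤ d(e - 1; D)`. Equality holds at `n = (e - 1)(e + 1)`, whose order is `e - 1`: its
maximal factorizations are exactly the lifts of the factorizations of `e - 1` over `D`. -/

section Factorizations

variable {t : ℕ}

def excess (g c : Fin (t + 1) → ℕ) : ℕ := ∑ i : Fin t, c i.succ * (g i.succ - g 0)

lemma excess_update_zero (g c : Fin (t + 1) → ℕ) (a : ℕ) :
    excess g (Function.update c 0 a) = excess g c := by
  simp [excess]

lemma sum_update_zero (c : Fin (t + 1) → ℕ) (a : ℕ) :
    ∑ i, Function.update c 0 a i = a + ∑ i : Fin t, c i.succ := by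
  simp [Fin.sum_univ_succ]

lemma sum_add_single_mul (c f : Fin (t + 1) → ℕ) (j : Fin (t + 1)) (k : ℕ) :
    ∑ i, (c + Pi.single j k : Fin (t + 1) → ℕ) i * f i = ∑ i, c i * f i + k * f j := by
  simp [add_mul, Finset.sum_add_distrib, Pi.single_apply]

lemma sum_mul_eq_sum_mul_add_excess {g : Fin (t + 1) → ℕ} (hg : Monotone g)
    (c : Fin (t + 1) → ℕ) : ∑ i, c i * g i = (∑ i, c i) * g 0 + excess g c := by
  have hsucc : ∀ i : Fin t, c i.succ * g i.succ = c i.succ * g 0 + c i.succ * (g i.succ - g 0) :=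
    fun i => by rw [← Nat.mul_add, Nat.add_sub_cancel' (hg (Fin.zero_le _))]
  simp only [Fin.sum_univ_succ, hsucc, Finset.sum_add_distrib, add_mul, Finset.sum_mul, excess]
  ring

lemma sum_mul_blowD_eq (g c : Fin (t + 1) → ℕ) :
    ∑ i, c i * blowD g i = c 0 * g 0 + excess g c := by
  simp [Fin.sum_univ_succ, blowD, excess, Fin.succ_ne_zero]

lemma pos_of_pos_zero {g : Fin (t + 1) → ℕ} (hg : Monotone g) (h0 : 0 < g 0) (i : Fin (t + 1)) :
    0 < g i :=
  h0.trans_le (hg (Fin.zero_le i))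

lemma sum_succ_le_excess {g : Fin (t + 1) → ℕ} (hg : StrictMono g) (c : Fin (t + 1) → ℕ) :
    ∑ i : Fin t, c i.succ ≤ excess g c :=
  Finset.sum_le_sum fun i _ =>
    Nat.le_mul_of_pos_right _ (Nat.sub_pos_of_lt (hg (Fin.succ_pos i)))

lemma blowD_pos {g : Fin (t + 1) → ℕ} (hg : StrictMono g) (h0 : 0 < g 0) (i : Fin (t + 1)) :
    0 < blowD g i := by
  cases i using Fin.cases with
  | zero => simpa [blowD] using h0
  | succ i => simpa [blowD, Fin.succ_ne_zero] using hg (Fin.succ_pos i)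

lemma one_ne_zero_of_gen_one {g : Fin (t + 1) → ℕ} (hgen : g 1 = g 0 + 1) :
    (1 : Fin (t + 1)) ≠ 0 :=
  fun h => by simp [h] at hgen

lemma blowD_one {g : Fin (t + 1) → ℕ} (hgen : g 1 = g 0 + 1) : blowD g 1 = 1 := by
  simp [blowD, one_ne_zero_of_gen_one hgen, hgen]

lemma eq_of_update_zero_eq {c c' : Fin (t + 1) → ℕ} {a a' : ℕ}
    (h : Function.update c 0 a = Function.update c' 0 a') (hsum : ∑ i, c i = ∑ i, c' i) :
    c = c' := by
  have hsucc : ∀ i : Fin t, c i.succ = c' i.succ := fun i => by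
    simpa [Function.update_of_ne (Fin.succ_ne_zero i)] using congrFun h i.succ
  funext i
  cases i using Fin.cases with
  | zero => simpa [Fin.sum_univ_succ, hsucc] using hsum
  | succ i => exact hsucc i

end Factorizations

section PositiveGenerators

variable {t : ℕ} {f : Fin (t + 1) → ℕ}

lemma sum_le_of_mem_Fac (hf : ∀ i, 0 < f i) {n : ℕ} {c : Fin (t + 1) → ℕ} (hc : c ∈ Fac f n) :
    ∑ i, c i ≤ n :=
  (Finset.sum_le_sum fun i _ => Nat.le_mul_of_pos_right _ (hf i)).trans_eq hc

lemma Fac_finite (hf : ∀ i, 0 < f i) (n : ℕ) : (Fac f n).Finite :=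
  (Set.Finite.pi' fun _ => Set.finite_Iic n).subset fun c hc i =>
    (Finset.single_le_sum (fun j _ => Nat.zero_le (c j)) (Finset.mem_univ i)).trans
      (sum_le_of_mem_Fac hf hc)

lemma bddAbove_lengths (hf : ∀ i, 0 < f i) (n : ℕ) :
    BddAbove {r | ∃ c ∈ Fac f n, ∑ i, c i = r} :=
  ⟨n, by rintro _ ⟨c, hc, rfl⟩; exact sum_le_of_mem_Fac hf hc⟩

lemma sum_le_ordOf (hf : ∀ i, 0 < f i) {n : ℕ} {c : Fin (t + 1) → ℕ} (hc : c ∈ Fac f n) :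
    ∑ i, c i ≤ ordOf f n :=
  le_csSup (bddAbove_lengths hf n) ⟨c, hc, rfl⟩

lemma exists_mem_Fac_sum_eq_ordOf (hf : ∀ i, 0 < f i) {n : ℕ} (hn : n ∈ Sg f) :
    ∃ c ∈ Fac f n, ∑ i, c i = ordOf f n := by
  obtain ⟨c, hc⟩ := hn
  exact Nat.sSup_mem (s := {r | ∃ c ∈ Fac f n, ∑ i, c i = r}) ⟨_, c, hc, rfl⟩
    (bddAbove_lengths hf n)

lemma denum_mono (hf : ∀ i, 0 < f i) {j : Fin (t + 1)} (hj : f j = 1) : Monotone (denum f) := by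
  intro m m' hmm'
  refine Set.ncard_le_ncard_of_injOn (fun c => c + Pi.single j (m' - m))
    (fun c hc => ?_) (fun c _ c' _ h => add_right_cancel h) (Fac_finite hf m')
  have hc : ∑ i, c i * f i = m := hc
  show ∑ i, (c + Pi.single j (m' - m) : Fin (t + 1) → ℕ) i * f i = m'
  rw [sum_add_single_mul, hc, hj]
  omega

end PositiveGenerators

section Semigroup

variable {t : ℕ} {g : Fin (t + 1) → ℕ}

lemma add_mul_mem_Sg {u : ℕ} (hu : u ∈ Sg g) (k : ℕ) : u + k * g 0 ∈ Sg g := by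
  obtain ⟨c, hc⟩ := hu
  exact ⟨c + Pi.single 0 k, by rw [sum_add_single_mul, hc]⟩

lemma ordOf_add_mul (hadd : IsAdditive g) {u : ℕ} (hu : u ∈ Sg g) (k : ℕ) :
    ordOf g (u + k * g 0) = ordOf g u + k := by
  induction k with
  | zero => simp
  | succ k ih =>
    rw [add_one_mul, ← add_assoc, hadd _ (add_mul_mem_Sg hu k), ih, add_assoc]

lemma excess_lt_of_sum_eq_ordOf (hg : StrictMono g) (h0 : 0 < g 0) (hgen : g 1 = g 0 + 1)
    (hadd : IsAdditive g) {n : ℕ} {c : Fin (t + 1) → ℕ} (hc : c ∈ Fac g n)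
    (hmax : ∑ i, c i = ordOf g n) : excess g c < g 0 := by
  have hpos : ∀ i, 0 < g i := pos_of_pos_zero hg.monotone h0
  by_contra! hle
  set e := g 0
  set m := excess g c
  set s := ∑ i : Fin t, c i.succ
  have hsm : s ≤ m := sum_succ_le_excess hg c
  have hlen : ∑ i, c i = c 0 + s := Fin.sum_univ_succ c
  have hn : (c 0 + s) * e + m = n := by
    rw [← hlen, ← sum_mul_eq_sum_mul_add_excess hg.monotone]; exact hc
  have hord : ordOf g (n + (m - s) * e) = c 0 + m := by
    rw [ordOf_add_mul hadd ⟨c, hc⟩, ← hmax, hlen]; omega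
  set w : Fin (t + 1) → ℕ := Pi.single 0 (c 0 + e + 1) + Pi.single 1 (m - e)
  have hw : w ∈ Fac g (n + (m - s) * e) := by
    show ∑ i, w i * g i = _
    simp only [w, Pi.add_apply, add_mul, Finset.sum_add_distrib, Pi.single_apply, ite_mul,
      zero_mul, Finset.sum_ite_eq', Finset.mem_univ, if_true, hgen]
    zify [hle, hsm] at hn ⊢
    linear_combination hn
  have hwlen : ∑ i, w i = c 0 + e + 1 + (m - e) := by simp [w, Finset.sum_add_distrib]
  have := sum_le_ordOf hpos hw
  omega

end Semigroup

section Bounds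

variable {t : ℕ} {g : Fin (t + 1) → ℕ}

lemma update_zero_mem_Fac_blowD (hg : Monotone g) {n : ℕ} {c : Fin (t + 1) → ℕ}
    (hc : c ∈ Fac g n) : Function.update c 0 0 ∈ Fac (blowD g) (n - (∑ i, c i) * g 0) := by
  have hc : ∑ i, c i * g i = n := hc
  show ∑ i, Function.update c 0 0 i * blowD g i = _
  rw [sum_mul_blowD_eq, excess_update_zero, ← hc, sum_mul_eq_sum_mul_add_excess hg]
  simp

lemma dmaxEl_le_denum_adj (hg : StrictMono g) (h0 : 0 < g 0) (n : ℕ) :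
    dmaxEl g n ≤ denum (blowD g) (adj g n) :=
  Set.ncard_le_ncard_of_injOn (fun c => Function.update c 0 0)
    (fun _ ⟨hc, hlen⟩ => by rw [adj, ← hlen]; exact update_zero_mem_Fac_blowD hg.monotone hc)
    (fun _ ⟨_, hlen⟩ _ ⟨_, hlen'⟩ h => eq_of_update_zero_eq h (hlen.trans hlen'.symm))
    (Fac_finite (blowD_pos hg h0) _)

lemma adj_lt (hg : StrictMono g) (h0 : 0 < g 0) (hgen : g 1 = g 0 + 1) (hadd : IsAdditive g)
    {n : ℕ} (hn : n ∈ Sg g) : adj g n < g 0 := by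
  obtain ⟨c, hc, hmax⟩ :=
    exists_mem_Fac_sum_eq_ordOf (f := g) (pos_of_pos_zero hg.monotone h0) hn
  have hc' : ∑ i, c i * g i = n := hc
  rw [adj, ← hmax, ← hc', sum_mul_eq_sum_mul_add_excess hg.monotone, Nat.add_sub_cancel_left]
  exact excess_lt_of_sum_eq_ordOf hg h0 hgen hadd hc hmax

lemma dmaxEl_le_denum (hg : StrictMono g) (h0 : 0 < g 0) (hgen : g 1 = g 0 + 1)
    (hadd : IsAdditive g) {n : ℕ} (hn : n ∈ Sg g) :
    dmaxEl g n ≤ denum (blowD g) (g 0 - 1) :=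
  (dmaxEl_le_denum_adj hg h0 n).trans <| denum_mono (blowD_pos hg h0) (blowD_one hgen) <|
    Nat.le_sub_one_of_lt (adj_lt hg h0 hgen hadd hn)

lemma single_one_mem_Fac (k : ℕ) : (Pi.single 1 k : Fin (t + 1) → ℕ) ∈ Fac g (k * g 1) := by
  simp [Fac, Pi.single_apply]

lemma ordOf_pred_mul_gen_one (hg : StrictMono g) (h0 : 0 < g 0) (hgen : g 1 = g 0 + 1) :
    ordOf g ((g 0 - 1) * g 1) = g 0 - 1 := by
  have hpos : ∀ i, 0 < g i := pos_of_pos_zero hg.monotone h0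
  obtain ⟨c, hc, hmax⟩ := exists_mem_Fac_sum_eq_ordOf hpos ⟨_, single_one_mem_Fac (g 0 - 1)⟩
  have hlower := sum_le_ordOf hpos (single_one_mem_Fac (g := g) (g 0 - 1))
  have hc : (∑ i, c i) * g 0 + excess g c = (g 0 - 1) * (g 0 + 1) := by
    rw [← sum_mul_eq_sum_mul_add_excess hg.monotone, ← hgen]; exact hc
  have hupper : ∑ i, c i < g 0 := by
    refine Nat.lt_of_mul_lt_mul_right (a := g 0) ?_
    rcases Nat.exists_eq_add_of_lt h0 with ⟨k, hk⟩
    rw [hk] at hc ⊢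
    simp only [zero_add, Nat.add_sub_cancel] at hc
    nlinarith
  simp only [Finset.sum_pi_single', Finset.mem_univ, if_true] at hlower
  omega

lemma apply_zero_eq_zero_of_mem_Fac_blowD {m : ℕ} {c : Fin (t + 1) → ℕ}
    (hc : c ∈ Fac (blowD g) m) (hm : m < g 0) : c 0 = 0 := by
  have hc : c 0 * g 0 + excess g c = m := (sum_mul_blowD_eq g c).symm.trans hc
  exact Nat.lt_one_iff.mp (Nat.lt_of_mul_lt_mul_right (a := g 0) (by omega))

lemma update_zero_mem_Fac_of_mem_Fac_blowD (hg : StrictMono g) (h0 : 0 < g 0)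
    (hgen : g 1 = g 0 + 1) {c : Fin (t + 1) → ℕ} (hc : c ∈ Fac (blowD g) (g 0 - 1)) :
    Function.update c 0 (g 0 - 1 - ∑ i, c i) ∈
      {c ∈ Fac g ((g 0 - 1) * g 1) | ∑ i, c i = ordOf g ((g 0 - 1) * g 1)} := by
  have hc0 : c 0 = 0 := apply_zero_eq_zero_of_mem_Fac_blowD hc (by omega)
  have hexcess : excess g c = g 0 - 1 := by
    have hc : ∑ i, c i * blowD g i = g 0 - 1 := hc
    rwa [sum_mul_blowD_eq, hc0, zero_mul, zero_add] at hc
  have hle : ∑ i, c i ≤ g 0 - 1 := sum_le_of_mem_Fac (blowD_pos hg h0) hc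
  have hlen : ∑ i, Function.update c 0 (g 0 - 1 - ∑ i, c i) i = g 0 - 1 := by
    rw [sum_update_zero]
    rw [Fin.sum_univ_succ, hc0, zero_add] at hle ⊢
    omega
  refine ⟨?_, hlen.trans (ordOf_pred_mul_gen_one hg h0 hgen).symm⟩
  show ∑ i, _ * g i = _
  rw [sum_mul_eq_sum_mul_add_excess hg.monotone, hlen, excess_update_zero, hexcess, hgen,
    mul_add_one]

lemma denum_le_dmaxEl (hg : StrictMono g) (h0 : 0 < g 0) (hgen : g 1 = g 0 + 1) :
    denum (blowD g) (g 0 - 1) ≤ dmaxEl g ((g 0 - 1) * g 1) :=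
  Set.ncard_le_ncard_of_injOn (fun c => Function.update c 0 (g 0 - 1 - ∑ i, c i))
    (fun _ hc => update_zero_mem_Fac_of_mem_Fac_blowD hg h0 hgen hc)
    (fun c hc c' hc' h => funext fun i => by
      cases i using Fin.cases with
      | zero =>
        rw [apply_zero_eq_zero_of_mem_Fac_blowD hc (by omega),
          apply_zero_eq_zero_of_mem_Fac_blowD hc' (by omega)]
      | succ i => simpa [Function.update_of_ne (Fin.succ_ne_zero i)] using congrFun h i.succ)
    ((Fac_finite (pos_of_pos_zero hg.monotone h0) _).subset
      (Set.sep_subset _ _))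

end Bounds

theorem stmt16_general {t : ℕ} (g : Fin (t + 1) → ℕ) (hS : IsNumSgp g)
    (hgen : g 1 = g 0 + 1) (hadd : IsAdditive g) :
    dmax g = denum (blowD g) (g 0 - 1) := by
  have hbound : ∀ m ∈ {m | ∃ n ∈ Sg g, dmaxEl g n = m}, m ≤ denum (blowD g) (g 0 - 1) := by
    rintro _ ⟨n, hn, rfl⟩
    exact dmaxEl_le_denum hS.mono hS.pos hgen hadd hn
  refine le_antisymm (csSup_le ⟨_, _, ⟨_, single_one_mem_Fac 0⟩, rfl⟩ hbound) ?_
  exact le_csSup_of_le ⟨_, hbound⟩ ⟨_, ⟨_, single_one_mem_Fac _⟩, rfl⟩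
    (denum_le_dmaxEl hS.mono hS.pos hgen)

/-- Proposition 4.14: if `S` is additive and its two smallest minimal generators differ
by 1, then `d_max(S) = d(e - 1; D)`. -/
theorem stmt16 {t : ℕ} (g : Fin (t + 1) → ℕ) (hS : IsNumSgp g) (ht : 0 < t)
    (hgen : g 1 = g 0 + 1) (hadd : IsAdditive g) :
    dmax g = denum (blowD g) (g 0 - 1) :=
  stmt16_general g hS hgen hadd
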